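/- arXiv:2303.04328 — 3 statements merged into one kernel-verified Lean document; each statement's English description precedes it below -/
import Mathlib

section
/- If f : ℝⁿ → ℝ is differentiable, L-smooth, and m-strongly convex with 0 < m ≤ L, then for all x, y: (mL/(m+L))‖y − x‖² + (1/(m+L))‖∇f(y) − ∇f(x)‖² ≤ ⟨∇f(y) − ∇f(x), y − x⟩. -/
/-!
Integrating the gradient along segments turns strong monotonicity and the Lipschitz bound into
the quadratic bounds `m/2 ‖y - x‖² ≤ f y - f x - ⟪f' x, y - x⟫ ≤ L/2 ‖y - x‖²`, so
`g = f - m/2 ‖·‖²` is convex and `(L - m)`-smooth with gradient `f' - m • id`. For such a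
function, comparing the two first-order bounds at the gradient step `y - (g' y - g' x) / (L - m)`
gives the Baillon–Haddad cocoercivity `‖g' y - g' x‖² ≤ (L - m) ⟪g' y - g' x, y - x⟫`, which
expands to the claim. When `m = L` the claim follows directly from the two hypotheses.
-/

open RealInnerProductSpace

open Set in
theorem le_add_deriv_add_of_deriv_sub_le {φ φ' : ℝ → ℝ} {K : ℝ}
    (hφ : ∀ t, HasDerivAt φ (φ' t) t) (hK : ∀ t ∈ Ioo (0 : ℝ) 1, φ' t - φ' 0 ≤ K * t) :
    φ 1 ≤ φ 0 + φ' 0 + K / 2 := by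
  let χ : ℝ → ℝ := fun t => φ t - t * φ' 0 - K / 2 * t ^ 2
  have hχ : ∀ t, HasDerivAt χ (φ' t - φ' 0 - K * t) t := fun t =>
    (((hφ t).sub ((hasDerivAt_id t).mul_const (φ' 0))).sub
      ((hasDerivAt_pow 2 t).const_mul (K / 2))).congr_deriv (by push_cast; ring)
  have hanti : AntitoneOn χ (Icc 0 1) :=
    antitoneOn_of_hasDerivWithinAt_nonpos (convex_Icc 0 1)
      (fun t _ => (hχ t).continuousAt.continuousWithinAt)
      (fun t _ => (hχ t).hasDerivWithinAt)
      (fun t ht => by rw [interior_Icc] at ht; linarith [hK t ht])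
  have := hanti (left_mem_Icc.2 zero_le_one) (right_mem_Icc.2 zero_le_one) zero_le_one
  simp only [χ] at this
  linarith

section

variable {E : Type*} [NormedAddCommGroup E] [InnerProductSpace ℝ E] [CompleteSpace E]

theorem HasGradientAt.neg {f : E → ℝ} {g x : E} (h : HasGradientAt f g x) :
    HasGradientAt (fun y => -f y) (-g) x := by
  rw [hasGradientAt_iff_hasFDerivAt, map_neg]
  exact h.hasFDerivAt.neg

theorem HasGradientAt.hasDerivAt_comp_add_smul {f : E → ℝ} {g x d : E} {t : ℝ}
    (h : HasGradientAt f g (x + t • d)) :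
    HasDerivAt (fun s : ℝ => f (x + s • d)) ⟪g, d⟫ t := by
  have hline : HasDerivAt (fun s : ℝ => x + s • d) d t := by
    simpa using ((hasDerivAt_id t).smul_const d).const_add x
  have h := h.hasFDerivAt.comp_hasDerivAt t hline
  simp only [InnerProductSpace.toDual_apply_apply] at h
  exact h

variable {f : E → ℝ} {f' : E → E} {K : ℝ}

theorem le_add_inner_add_of_inner_sub_le (hf : ∀ x, HasGradientAt f (f' x) x)
    (hK : ∀ x y, ⟪x - y, f' x - f' y⟫ ≤ K * ‖x - y‖ ^ 2) (x y : E) :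
    f y ≤ f x + ⟪f' x, y - x⟫ + K / 2 * ‖y - x‖ ^ 2 := by
  set d := y - x
  have := le_add_deriv_add_of_deriv_sub_le (K := K * ‖d‖ ^ 2)
    (fun t => (hf (x + t • d)).hasDerivAt_comp_add_smul) fun t ht => by
      have h := hK (x + t • d) x
      rw [add_sub_cancel_left, real_inner_smul_left, norm_smul, Real.norm_eq_abs,
        abs_of_pos ht.1, real_inner_comm] at h
      rw [zero_smul, add_zero, ← inner_sub_left]
      nlinarith [ht.1]
  simp only [one_smul, zero_smul, add_zero, d, add_sub_cancel] at this
  linarith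

theorem add_inner_add_le_of_le_inner_sub (hf : ∀ x, HasGradientAt f (f' x) x)
    (hK : ∀ x y, K * ‖x - y‖ ^ 2 ≤ ⟪x - y, f' x - f' y⟫) (x y : E) :
    f x + ⟪f' x, y - x⟫ + K / 2 * ‖y - x‖ ^ 2 ≤ f y := by
  have hK' : ∀ x y, ⟪x - y, -f' x - -f' y⟫ ≤ -K * ‖x - y‖ ^ 2 := fun x y => by
    rw [neg_sub_neg, ← neg_sub (f' x) (f' y), inner_neg_right]
    linarith [hK x y]
  have := le_add_inner_add_of_inner_sub_le (fun x => (hf x).neg) hK' x y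
  rw [inner_neg_left] at this
  linarith

end

section

variable {E : Type*} [NormedAddCommGroup E] [InnerProductSpace ℝ E]

theorem norm_sub_sq_le_mul_inner_of_convex_of_smooth {g : E → ℝ} {g' : E → E} {K : ℝ}
    (hK : 0 < K) (hconv : ∀ x y, g x + ⟪g' x, y - x⟫ ≤ g y)
    (hsmooth : ∀ x y, g y ≤ g x + ⟪g' x, y - x⟫ + K / 2 * ‖y - x‖ ^ 2) (x y : E) :
    ‖g' y - g' x‖ ^ 2 ≤ K * ⟪g' y - g' x, y - x⟫ := by
  have step : ∀ x y, g x + ⟪g' x, y - x⟫ + K⁻¹ / 2 * ‖g' y - g' x‖ ^ 2 ≤ g y := by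
    intro x y
    set u := g' y - g' x
    have hx := hconv x (y - K⁻¹ • u)
    have hy := hsmooth y (y - K⁻¹ • u)
    rw [sub_right_comm, inner_sub_right, real_inner_smul_right] at hx
    rw [sub_sub_cancel_left, inner_neg_right, real_inner_smul_right, norm_neg, norm_smul,
      Real.norm_eq_abs, abs_of_pos (inv_pos.2 hK)] at hy
    have hu : ⟪g' y, u⟫ - ⟪g' x, u⟫ = ‖u‖ ^ 2 := by
      rw [← inner_sub_left, real_inner_self_eq_norm_sq]
    have hK2 : K / 2 * (K⁻¹ * ‖u‖) ^ 2 = K⁻¹ / 2 * ‖u‖ ^ 2 := by field_simp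
    linear_combination hx + hy - K⁻¹ * hu + hK2
  have hxy := step x y
  have hyx := step y x
  rw [← neg_sub y x, inner_neg_right, ← norm_neg (g' x - g' y), neg_sub] at hyx
  have hsplit : ⟪g' y - g' x, y - x⟫ = ⟪g' y, y - x⟫ - ⟪g' x, y - x⟫ := inner_sub_left _ _ _
  have hK' : K⁻¹ * ‖g' y - g' x‖ ^ 2 ≤ ⟪g' y - g' x, y - x⟫ := by linarith
  rwa [inv_mul_le_iff₀ hK] at hK'

theorem mul_norm_sq_add_norm_sq_le_of_strongly_convex_of_smooth {f : E → ℝ} {f' : E → E}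
    {m L : ℝ} (hmL : m < L)
    (hlow : ∀ x y, f x + ⟪f' x, y - x⟫ + m / 2 * ‖y - x‖ ^ 2 ≤ f y)
    (hup : ∀ x y, f y ≤ f x + ⟪f' x, y - x⟫ + L / 2 * ‖y - x‖ ^ 2) (x y : E) :
    m * L * ‖y - x‖ ^ 2 + ‖f' y - f' x‖ ^ 2 ≤ (m + L) * ⟪f' y - f' x, y - x⟫ := by
  have hsq : ∀ x y : E, ‖y‖ ^ 2 = ‖x‖ ^ 2 + 2 * ⟪x, y - x⟫ + ‖y - x‖ ^ 2 := fun x y => by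
    rw [← norm_add_sq_real, add_sub_cancel]
  have hinner : ∀ x y : E, ⟪f' x - m • x, y - x⟫ = ⟪f' x, y - x⟫ - m * ⟪x, y - x⟫ :=
    fun x y => by rw [inner_sub_left, real_inner_smul_left]
  have hco := norm_sub_sq_le_mul_inner_of_convex_of_smooth (g := fun z => f z - m / 2 * ‖z‖ ^ 2)
    (g' := fun z => f' z - m • z) (sub_pos.2 hmL)
    (fun x y => by linear_combination hlow x y + m / 2 * hsq x y + hinner x y)
    (fun x y => by linear_combination hup x y - m / 2 * hsq x y - hinner x y) x y
  have hu : f' y - m • y - (f' x - m • x) = (f' y - f' x) - m • (y - x) := by module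
  have hnorm : ‖(f' y - f' x) - m • (y - x)‖ ^ 2
      = ‖f' y - f' x‖ ^ 2 - 2 * m * ⟪f' y - f' x, y - x⟫ + m ^ 2 * ‖y - x‖ ^ 2 := by
    rw [norm_sub_sq_real, real_inner_smul_right, norm_smul, Real.norm_eq_abs, mul_pow, sq_abs]
    ring
  have hinner' : ⟪(f' y - f' x) - m • (y - x), y - x⟫
      = ⟪f' y - f' x, y - x⟫ - m * ‖y - x‖ ^ 2 := by
    rw [inner_sub_left, real_inner_smul_left, real_inner_self_eq_norm_sq]
  rw [hu, hnorm, hinner'] at hco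
  linear_combination hco

end

theorem smooth_strongly_convex_cocoercivity
    (n : ℕ) (f : EuclideanSpace ℝ (Fin n) → ℝ)
    (f' : EuclideanSpace ℝ (Fin n) → EuclideanSpace ℝ (Fin n))
    (m L : ℝ) (hm : 0 < m) (hmL : m ≤ L)
    (hdiff : ∀ x, HasGradientAt f (f' x) x)
    (hlip : ∀ x y, ‖f' x - f' y‖ ≤ L * ‖x - y‖)
    (hmono : ∀ x y, m * ‖x - y‖ ^ 2 ≤ ⟪x - y, f' x - f' y⟫) :
    ∀ x y, (m * L / (m + L)) * ‖y - x‖ ^ 2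
        + (1 / (m + L)) * ‖f' y - f' x‖ ^ 2
      ≤ ⟪f' y - f' x, y - x⟫ := by
  intro x y
  have key : m * L * ‖y - x‖ ^ 2 + ‖f' y - f' x‖ ^ 2 ≤ (m + L) * ⟪f' y - f' x, y - x⟫ := by
    rcases hmL.eq_or_lt with rfl | hlt
    · have hG : ‖f' y - f' x‖ ^ 2 ≤ m ^ 2 * ‖y - x‖ ^ 2 := by
        rw [← mul_pow]
        exact pow_le_pow_left₀ (norm_nonneg _) (hlip y x) 2
      nlinarith [hmono y x, real_inner_comm (y - x) (f' y - f' x)]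
    · have hupper : ∀ x y, ⟪x - y, f' x - f' y⟫ ≤ L * ‖x - y‖ ^ 2 := fun x y => by
        nlinarith [real_inner_le_norm (x - y) (f' x - f' y), hlip x y, norm_nonneg (x - y)]
      exact mul_norm_sq_add_norm_sq_le_of_strongly_convex_of_smooth hlt
        (add_inner_add_le_of_le_inner_sub hdiff hmono)
        (le_add_inner_add_of_inner_sub_le hdiff hupper) x y
  calc _ = (m * L * ‖y - x‖ ^ 2 + ‖f' y - f' x‖ ^ 2) / (m + L) := by ring
    _ ≤ _ := (div_le_iff₀' (by linarith)).2 key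
end

section
/- Consider a discrete dynamical system ξ_{k+1} = A ξ_k + B u_k with fixed point ξ⋆ = A ξ⋆ + B u⋆. Let P be symmetric positive semidefinite, N symmetric, h ≥ 0, ρ ∈ (0,1), and suppose the block matrix M = [[AᵀPA − ρ²P, AᵀPB],[BᵀPA, BᵀPB]] satisfies M + hN ⪯ 0. If for all k the vector e_k = [(ξ_k − ξ⋆)ᵀ, (u_k − u⋆)ᵀ]ᵀ satisfies e_kᵀ N e_k ≥ 0, then V(ξ_{k+1}) ≤ ρ² V(ξ_k) for all k, where V(ξ) = (ξ − ξ⋆)ᵀ P (ξ − ξ⋆). -/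
/-!
Writing `G = [A B]` for the column-partitioned matrix, the LMI block matrix is
`M = Gᵀ P G - ρ² · diag(P, 0)`, and `G e_k = ξ_{k+1} - ξ⋆` because `ξ⋆` is a fixed point. Hence
`e_kᵀ M e_k = V(ξ_{k+1}) - ρ² V(ξ_k)`. The LMI together with `h ≥ 0` and the quadratic
constraint `e_kᵀ N e_k ≥ 0` forces `e_kᵀ M e_k ≤ 0` (an S-procedure step).
-/

open Matrix

section QuadraticForm

variable {ι κ m R : Type*} [Fintype m] [CommRing R]

theorem dotProduct_transpose_mul_mul_mulVec [Fintype ι] (G : Matrix m ι R) (P : Matrix m m R)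
    (v : ι → R) :
    v ⬝ᵥ (Gᵀ * P * G) *ᵥ v = (G *ᵥ v) ⬝ᵥ P *ᵥ (G *ᵥ v) := by
  rw [← mulVec_mulVec, ← mulVec_mulVec, dotProduct_mulVec, vecMul_transpose]

theorem fromBlocks_transpose_mul_mul (A : Matrix m ι R) (B : Matrix m κ R) (P : Matrix m m R) :
    fromBlocks (Aᵀ * P * A) (Aᵀ * P * B) (Bᵀ * P * A) (Bᵀ * P * B) =
      (fromCols A B)ᵀ * P * fromCols A B := by
  rw [transpose_fromCols, fromRows_mul, fromRows_mul_fromCols]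

theorem sumElim_dotProduct_fromBlocks_zero_mulVec [Fintype ι] [Fintype κ] (P : Matrix ι ι R)
    (x : ι → R) (y : κ → R) :
    Sum.elim x y ⬝ᵥ fromBlocks P 0 0 (0 : Matrix κ κ R) *ᵥ Sum.elim x y = x ⬝ᵥ P *ᵥ x := by
  simp [fromBlocks_mulVec, sumElim_dotProduct_sumElim]

theorem sumElim_dotProduct_fromBlocks_sub_smul_mulVec [Fintype ι] [Fintype κ]
    (A : Matrix ι ι R) (B : Matrix ι κ R) (P : Matrix ι ι R) (c : R) (x : ι → R) (y : κ → R) :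
    Sum.elim x y ⬝ᵥ
        fromBlocks (Aᵀ * P * A - c • P) (Aᵀ * P * B) (Bᵀ * P * A) (Bᵀ * P * B) *ᵥ Sum.elim x y =
      (A *ᵥ x + B *ᵥ y) ⬝ᵥ P *ᵥ (A *ᵥ x + B *ᵥ y) - c * (x ⬝ᵥ P *ᵥ x) := by
  have hsplit : fromBlocks (Aᵀ * P * A - c • P) (Aᵀ * P * B) (Bᵀ * P * A) (Bᵀ * P * B) =
      (fromCols A B)ᵀ * P * fromCols A B - c • fromBlocks P 0 0 (0 : Matrix κ κ R) := by
    rw [← fromBlocks_transpose_mul_mul]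
    ext (i | i) (j | j) <;> simp
  rw [hsplit, sub_mulVec, smul_mulVec, dotProduct_sub, dotProduct_smul, smul_eq_mul,
    dotProduct_transpose_mul_mul_mulVec, fromCols_mulVec_sumElim,
    sumElim_dotProduct_fromBlocks_zero_mulVec]

end QuadraticForm

theorem dotProduct_mulVec_nonpos_of_add_smul {ι R : Type*} [Fintype ι] [CommRing R]
    [PartialOrder R] [IsOrderedRing R] {M N : Matrix ι ι R} {h : R} (hh : 0 ≤ h) {v : ι → R}
    (hMN : v ⬝ᵥ (M + h • N) *ᵥ v ≤ 0) (hN : 0 ≤ v ⬝ᵥ N *ᵥ v) : v ⬝ᵥ M *ᵥ v ≤ 0 := by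
  rw [add_mulVec, smul_mulVec, dotProduct_add, dotProduct_smul, smul_eq_mul] at hMN
  exact (le_add_of_nonneg_right (mul_nonneg hh hN)).trans hMN

theorem sub_eq_mulVec_sub_add_mulVec_sub {ι κ R : Type*} [Fintype ι] [Fintype κ] [Ring R]
    {A : Matrix ι ι R} {B : Matrix ι κ R} {ξ ξ' ξstar : ι → R} {u ustar : κ → R}
    (hstep : ξ' = A *ᵥ ξ + B *ᵥ u) (hfix : ξstar = A *ᵥ ξstar + B *ᵥ ustar) :
    ξ' - ξstar = A *ᵥ (ξ - ξstar) + B *ᵥ (u - ustar) := by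
  conv_lhs => rw [hstep, hfix]
  rw [mulVec_sub, mulVec_sub]
  abel

theorem lmi_implies_lyapunov_decrease_general
    (d n : ℕ)
    (A : Matrix (Fin d) (Fin d) ℝ) (B : Matrix (Fin d) (Fin n) ℝ)
    (P : Matrix (Fin d) (Fin d) ℝ)
    (N : Matrix (Fin d ⊕ Fin n) (Fin d ⊕ Fin n) ℝ)
    (h : ℝ) (hh : 0 ≤ h) (ρ : ℝ)
    (ξ : ℕ → Fin d → ℝ) (u : ℕ → Fin n → ℝ)
    (ξstar : Fin d → ℝ) (ustar : Fin n → ℝ)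
    (hdyn : ∀ k, ξ (k + 1) = A.mulVec (ξ k) + B.mulVec (u k))
    (hfix : ξstar = A.mulVec ξstar + B.mulVec ustar)
    (M : Matrix (Fin d ⊕ Fin n) (Fin d ⊕ Fin n) ℝ)
    (hM : M = fromBlocks (Aᵀ * P * A - ρ ^ 2 • P) (Aᵀ * P * B)
        (Bᵀ * P * A) (Bᵀ * P * B))
    (hLMI : ∀ v, v ⬝ᵥ (M + h • N).mulVec v ≤ 0)
    (e : ℕ → (Fin d ⊕ Fin n) → ℝ)
    (he : ∀ k, e k = Sum.elim (ξ k - ξstar) (u k - ustar))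
    (hQC : ∀ k, 0 ≤ e k ⬝ᵥ N.mulVec (e k))
    (V : (Fin d → ℝ) → ℝ)
    (hV : ∀ z, V z = (z - ξstar) ⬝ᵥ P.mulVec (z - ξstar)) :
    ∀ k, V (ξ (k + 1)) ≤ ρ ^ 2 * V (ξ k) := by
  intro k
  have hMe : e k ⬝ᵥ M *ᵥ e k = V (ξ (k + 1)) - ρ ^ 2 * V (ξ k) := by
    rw [he k, hM, sumElim_dotProduct_fromBlocks_sub_smul_mulVec, hV, hV,
      sub_eq_mulVec_sub_add_mulVec_sub (hdyn k) hfix]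
  have hMe_nonpos := dotProduct_mulVec_nonpos_of_add_smul hh (hLMI (e k)) (hQC k)
  linarith

theorem lmi_implies_lyapunov_decrease
    (d n : ℕ)
    (A : Matrix (Fin d) (Fin d) ℝ) (B : Matrix (Fin d) (Fin n) ℝ)
    (P : Matrix (Fin d) (Fin d) ℝ) (hP : P.PosSemidef)
    (N : Matrix (Fin d ⊕ Fin n) (Fin d ⊕ Fin n) ℝ) (hN : N.IsSymm)
    (h : ℝ) (hh : 0 ≤ h) (ρ : ℝ) (hρ : ρ ∈ Set.Ioo (0 : ℝ) 1)
    (ξ : ℕ → Fin d → ℝ) (u : ℕ → Fin n → ℝ)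
    (ξstar : Fin d → ℝ) (ustar : Fin n → ℝ)
    (hdyn : ∀ k, ξ (k + 1) = A.mulVec (ξ k) + B.mulVec (u k))
    (hfix : ξstar = A.mulVec ξstar + B.mulVec ustar)
    (M : Matrix (Fin d ⊕ Fin n) (Fin d ⊕ Fin n) ℝ)
    (hM : M = fromBlocks (Aᵀ * P * A - ρ ^ 2 • P) (Aᵀ * P * B)
        (Bᵀ * P * A) (Bᵀ * P * B))
    (hLMI : ∀ v, v ⬝ᵥ (M + h • N).mulVec v ≤ 0)
    (e : ℕ → (Fin d ⊕ Fin n) → ℝ)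
    (he : ∀ k, e k = Sum.elim (ξ k - ξstar) (u k - ustar))
    (hQC : ∀ k, 0 ≤ e k ⬝ᵥ N.mulVec (e k))
    (V : (Fin d → ℝ) → ℝ)
    (hV : ∀ z, V z = (z - ξstar) ⬝ᵥ P.mulVec (z - ξstar)) :
    ∀ k, V (ξ (k + 1)) ≤ ρ ^ 2 * V (ξ k) :=
  lmi_implies_lyapunov_decrease_general d n A B P N h hh ρ ξ u ξstar ustar hdyn hfix M hM hLMI e he
    hQC V hV
end

section
/- Let f : ℝⁿ → ℝ be differentiable, L-smooth and m-strongly convex with minimizer x⋆, and let ρ ∈ (0,1), η ≥ 0, α > 0, 0 < c₁ ≤ c₂. Consider the AFOAGD iteration x_{k+1} = y_k − αγ_k∇f(y_k), y_k = x_k + η(x_k − x_{k−1}) with γ_k ∈ [c₁, c₂]. If there exist a PSD matrix P and h ≥ 0 such that for every k, e_kᵀ(M + (1−ρ²)N¹ + ρ²N²_k + hN³)e_k ≤ 0 holds along with the bounds f(x_{k+1}) − f(x⋆) ≤ e_kᵀN¹e_k, f(x_{k+1}) − f(x_k) ≤ e_kᵀN²_k e_k, and e_kᵀN³e_k ≥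 0, then the Lyapunov function V(ξ_k) = (ξ_k − ξ⋆)ᵀP(ξ_k − ξ⋆) + f(x_k) − f(x⋆) satisfies V(ξ_{k+1}) ≤ ρ²V(ξ_k), and hence ‖x_k − x⋆‖ ≤ ρ^k√(2V(ξ₀)/m). -/
/-!
Along the iteration the error state satisfies `ξ' - ξ⋆ = A (ξ - ξ⋆) + B u`, so the quadratic form
of `M` at `e = (ξ - ξ⋆, u)` is exactly `(ξ' - ξ⋆)ᵀ P (ξ' - ξ⋆) - ρ² (ξ - ξ⋆)ᵀ P (ξ - ξ⋆)`.
Adding to the LMI the bounds on `f(x') - f⋆`, `f(x') - f(x)` and the nonnegative `N³`-term with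
multipliers `1 - ρ²`, `ρ²`, `h` gives `V' ≤ ρ² V`. Since `P ⪰ 0` and `∇f(x⋆) = 0`, strong
convexity gives `(m/2) ‖x - x⋆‖² ≤ V`, and iterating the contraction yields the rate.
-/

open Matrix

theorem sumElim_dotProduct_fromBlocks_mulVec_sumElim {ι κ : Type*} [Fintype ι] [Fintype κ]
    (A : Matrix ι ι ℝ) (B : Matrix ι κ ℝ) (P : Matrix ι ι ℝ) (c : ℝ) (z : ι → ℝ) (u : κ → ℝ) :
    Sum.elim z u ⬝ᵥ
        fromBlocks (Aᵀ * P * A - c • P) (Aᵀ * P * B) (Bᵀ * P * A) (Bᵀ * P * B) *ᵥ Sum.elim z u =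
      (A *ᵥ z + B *ᵥ u) ⬝ᵥ P *ᵥ (A *ᵥ z + B *ᵥ u) - c * (z ⬝ᵥ P *ᵥ z) := by
  rw [fromBlocks_mulVec, sumElim_dotProduct_sumElim]
  simp only [Sum.elim_comp_inl, Sum.elim_comp_inr, sub_mulVec, smul_mulVec, ← mulVec_mulVec,
    dotProduct_sub, dotProduct_add, dotProduct_smul, add_dotProduct, mulVec_add,
    dotProduct_mulVec z Aᵀ, dotProduct_mulVec u Bᵀ, vecMul_transpose, smul_eq_mul]
  ring

section HeavyBallRealization

variable {ι κ : Type*} [Fintype ι] [DecidableEq ι]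

theorem fromBlocks_companion_mulVec_sumElim (a b : ℝ) (p q : ι → ℝ) :
    fromBlocks 0 1 (a • (1 : Matrix ι ι ℝ)) (b • (1 : Matrix ι ι ℝ)) *ᵥ Sum.elim p q =
      Sum.elim q (a • p + b • q) := by
  simp [fromBlocks_mulVec, smul_mulVec]

theorem of_sumElim_zero_diagonal_mulVec (c : ℝ) (v : ι → ℝ) :
    Matrix.of (Sum.elim (fun (_ : κ) (_ : ι) => (0 : ℝ)) (fun i j => if i = j then c else 0)) *ᵥ v =
      Sum.elim (0 : κ → ℝ) (c • v) := by
  ext (i | i) <;> simp [mulVec, dotProduct, ite_mul]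

theorem heavyBall_error_step {η α : ℝ} {x₀ x₁ x₂ y v xstar : ι → ℝ}
    (hy : y = x₁ + η • (x₁ - x₀)) (hx : x₂ = y - α • v) :
    Sum.elim (x₁ - xstar) (x₂ - xstar) =
      fromBlocks 0 1 (-η • (1 : Matrix ι ι ℝ)) ((1 + η) • (1 : Matrix ι ι ℝ)) *ᵥ
          Sum.elim (x₀ - xstar) (x₁ - xstar) +
        Matrix.of (Sum.elim (fun (_ : ι) (_ : ι) => (0 : ℝ))
          (fun i j => if i = j then -α else 0)) *ᵥ v := by
  rw [fromBlocks_companion_mulVec_sumElim, of_sumElim_zero_diagonal_mulVec, ← Sum.elim_add_add,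
    add_zero, hx, hy]
  congr 1
  ext i
  simp only [Pi.add_apply, Pi.sub_apply, Pi.smul_apply, smul_eq_mul]
  ring

end HeavyBallRealization

theorem add_le_mul_add_of_lmi {ι : Type*} [Fintype ι] {M N₁ N₂ N₃ : Matrix ι ι ℝ} {e : ι → ℝ}
    {c h Q Q' F F' : ℝ} (hc₀ : 0 ≤ c) (hc₁ : c ≤ 1) (hh : 0 ≤ h)
    (hM : e ⬝ᵥ M *ᵥ e = Q' - c * Q) (hN₁ : F' ≤ e ⬝ᵥ N₁ *ᵥ e) (hN₂ : F' - F ≤ e ⬝ᵥ N₂ *ᵥ e)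
    (hN₃ : 0 ≤ e ⬝ᵥ N₃ *ᵥ e) (hLMI : e ⬝ᵥ (M + (1 - c) • N₁ + c • N₂ + h • N₃) *ᵥ e ≤ 0) :
    Q' + F' ≤ c * (Q + F) := by
  simp only [add_mulVec, smul_mulVec, dotProduct_add, dotProduct_smul, smul_eq_mul] at hLMI
  nlinarith [mul_le_mul_of_nonneg_left hN₁ (sub_nonneg.2 hc₁),
    mul_le_mul_of_nonneg_left hN₂ hc₀, mul_nonneg hh hN₃]

theorem sqrt_le_mul_sqrt_of_half_mul_le {m r d v : ℝ} (hm : 0 < m) (hr : 0 ≤ r)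
    (h : m / 2 * d ≤ r ^ 2 * v) : √d ≤ r * √(2 * v / m) := by
  have hd : d ≤ r ^ 2 * (2 * v / m) := by
    rw [mul_div_assoc', le_div_iff₀ hm]
    linarith
  calc √d ≤ √(r ^ 2 * (2 * v / m)) := Real.sqrt_le_sqrt hd
    _ = r * √(2 * v / m) := by rw [Real.sqrt_mul (sq_nonneg r), Real.sqrt_sq hr]

theorem afoagd_lyapunov_convergence_general
    (n : ℕ) (f : (Fin n → ℝ) → ℝ) (g : (Fin n → ℝ) → (Fin n → ℝ))
    (m η α ρ : ℝ)
    (hm : 0 < m) (hρ : ρ ∈ Set.Ioo (0 : ℝ) 1)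
    -- L-smoothness and m-strong convexity of f with gradient g
    (hsc : ∀ a b, f a + g a ⬝ᵥ (b - a) + (m / 2) * ((b - a) ⬝ᵥ (b - a)) ≤ f b)
    (xstar : Fin n → ℝ) (hstar : g xstar = 0)
    -- AFOAGD iteration
    (x y : ℕ → Fin n → ℝ) (γ : ℕ → ℝ)
    (hy : ∀ k, y k = x (k + 1) + η • (x (k + 1) - x k))
    (hx : ∀ k, x (k + 2) = y k - (α * γ k) • g (y k))
    -- state, input and combined vectors
    (ξ : ℕ → (Fin n ⊕ Fin n) → ℝ) (ξstar : (Fin n ⊕ Fin n) → ℝ)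
    (hξ : ∀ k, ξ k = Sum.elim (x k) (x (k + 1)))
    (hξstar : ξstar = Sum.elim xstar xstar)
    (u : ℕ → Fin n → ℝ) (hu : ∀ k, u k = γ k • g (y k))
    (e : ℕ → ((Fin n ⊕ Fin n) ⊕ Fin n) → ℝ)
    (he : ∀ k, e k = Sum.elim (ξ k - ξstar) (u k))
    -- state-space matrices
    (A : Matrix (Fin n ⊕ Fin n) (Fin n ⊕ Fin n) ℝ)
    (hA : A = fromBlocks 0 1 (-η • (1 : Matrix (Fin n) (Fin n) ℝ))
        ((1 + η) • (1 : Matrix (Fin n) (Fin n) ℝ)))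
    (B : Matrix (Fin n ⊕ Fin n) (Fin n) ℝ)
    (hB : B = Matrix.of (Sum.elim (fun _ _ => (0 : ℝ))
        (fun i j => if i = j then -α else 0)))
    (P : Matrix (Fin n ⊕ Fin n) (Fin n ⊕ Fin n) ℝ) (hP : P.PosSemidef)
    (h : ℝ) (hh : 0 ≤ h)
    (M : Matrix ((Fin n ⊕ Fin n) ⊕ Fin n) ((Fin n ⊕ Fin n) ⊕ Fin n) ℝ)
    (hM : M = fromBlocks (Aᵀ * P * A - ρ ^ 2 • P) (Aᵀ * P * B)
        (Bᵀ * P * A) (Bᵀ * P * B))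
    (N1 N3 : Matrix ((Fin n ⊕ Fin n) ⊕ Fin n) ((Fin n ⊕ Fin n) ⊕ Fin n) ℝ)
    (N2 : ℕ → Matrix ((Fin n ⊕ Fin n) ⊕ Fin n) ((Fin n ⊕ Fin n) ⊕ Fin n) ℝ)
    -- the quadratic bounds and the LMI along trajectories
    (hb1 : ∀ k, f (x (k + 2)) - f xstar ≤ e k ⬝ᵥ N1.mulVec (e k))
    (hb2 : ∀ k, f (x (k + 2)) - f (x (k + 1)) ≤ e k ⬝ᵥ (N2 k).mulVec (e k))
    (hb3 : ∀ k, 0 ≤ e k ⬝ᵥ N3.mulVec (e k))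
    (hLMI : ∀ k, e k ⬝ᵥ (M + (1 - ρ ^ 2) • N1 + ρ ^ 2 • N2 k
        + h • N3).mulVec (e k) ≤ 0)
    -- Lyapunov function
    (V : ℕ → ℝ)
    (hV : ∀ k, V k = (ξ k - ξstar) ⬝ᵥ P.mulVec (ξ k - ξstar)
        + f (x (k + 1)) - f xstar) :
    (∀ k, V (k + 1) ≤ ρ ^ 2 * V k) ∧
    (∀ k, Real.sqrt ((x (k + 1) - xstar) ⬝ᵥ (x (k + 1) - xstar))
        ≤ ρ ^ k * Real.sqrt (2 * V 0 / m)) := by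
  obtain ⟨hρ₀, hρ₁⟩ := hρ
  have hξ_sub k : ξ k - ξstar = Sum.elim (x k - xstar) (x (k + 1) - xstar) := by
    rw [hξ, hξstar, Sum.elim_sub_sub]
  have hstep k : ξ (k + 1) - ξstar = A *ᵥ (ξ k - ξstar) + B *ᵥ u k := by
    rw [hξ_sub, hξ_sub, hA, hB, hu]
    exact heavyBall_error_step (hy k) (by rw [hx, smul_smul])
  have hdecrease k : V (k + 1) ≤ ρ ^ 2 * V k := by
    rw [hV, hV, add_sub_assoc, add_sub_assoc]
    refine add_le_mul_add_of_lmi (sq_nonneg ρ) (pow_le_one₀ hρ₀.le hρ₁.le) hh ?_ (hb1 k)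
      ((sub_sub_sub_cancel_right _ _ _).trans_le (hb2 k)) (hb3 k) (hLMI k)
    rw [he, hM, sumElim_dotProduct_fromBlocks_mulVec_sumElim, ← hstep]
  have hlower k : m / 2 * ((x (k + 1) - xstar) ⬝ᵥ (x (k + 1) - xstar)) ≤ V k := by
    have hPξ := hP.dotProduct_mulVec_nonneg (ξ k - ξstar)
    have hf := hsc xstar (x (k + 1))
    rw [hstar, zero_dotProduct] at hf
    rw [star_trivial] at hPξ
    rw [hV]
    linarith
  refine ⟨hdecrease, fun k => sqrt_le_mul_sqrt_of_half_mul_le hm (pow_nonneg hρ₀.le k) ?_⟩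
  calc _ ≤ V k := hlower k
    _ ≤ (ρ ^ 2) ^ k * V 0 := le_geom (sq_nonneg ρ) k fun j _ => hdecrease j
    _ = (ρ ^ k) ^ 2 * V 0 := by ring

theorem afoagd_lyapunov_convergence
    (n : ℕ) (f : (Fin n → ℝ) → ℝ) (g : (Fin n → ℝ) → (Fin n → ℝ))
    (m L η α c₁ c₂ ρ : ℝ)
    (hm : 0 < m) (hmL : m ≤ L) (hη : 0 ≤ η) (hα : 0 < α)
    (hc₁ : 0 < c₁) (hc : c₁ ≤ c₂) (hρ : ρ ∈ Set.Ioo (0 : ℝ) 1)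
    -- L-smoothness and m-strong convexity of f with gradient g
    (hsmooth : ∀ a b, f b ≤ f a + g a ⬝ᵥ (b - a) + (L / 2) * ((b - a) ⬝ᵥ (b - a)))
    (hsc : ∀ a b, f a + g a ⬝ᵥ (b - a) + (m / 2) * ((b - a) ⬝ᵥ (b - a)) ≤ f b)
    (xstar : Fin n → ℝ) (hstar : g xstar = 0)
    -- AFOAGD iteration
    (x y : ℕ → Fin n → ℝ) (γ : ℕ → ℝ)
    (hγ : ∀ k, c₁ ≤ γ k ∧ γ k ≤ c₂)
    (hy : ∀ k, y k = x (k + 1) + η • (x (k + 1) - x k))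
    (hx : ∀ k, x (k + 2) = y k - (α * γ k) • g (y k))
    -- state, input and combined vectors
    (ξ : ℕ → (Fin n ⊕ Fin n) → ℝ) (ξstar : (Fin n ⊕ Fin n) → ℝ)
    (hξ : ∀ k, ξ k = Sum.elim (x k) (x (k + 1)))
    (hξstar : ξstar = Sum.elim xstar xstar)
    (u : ℕ → Fin n → ℝ) (hu : ∀ k, u k = γ k • g (y k))
    (e : ℕ → ((Fin n ⊕ Fin n) ⊕ Fin n) → ℝ)
    (he : ∀ k, e k = Sum.elim (ξ k - ξstar) (u k))
    -- state-space matrices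
    (A : Matrix (Fin n ⊕ Fin n) (Fin n ⊕ Fin n) ℝ)
    (hA : A = fromBlocks 0 1 (-η • (1 : Matrix (Fin n) (Fin n) ℝ))
        ((1 + η) • (1 : Matrix (Fin n) (Fin n) ℝ)))
    (B : Matrix (Fin n ⊕ Fin n) (Fin n) ℝ)
    (hB : B = Matrix.of (Sum.elim (fun _ _ => (0 : ℝ))
        (fun i j => if i = j then -α else 0)))
    (P : Matrix (Fin n ⊕ Fin n) (Fin n ⊕ Fin n) ℝ) (hP : P.PosSemidef)
    (h : ℝ) (hh : 0 ≤ h)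
    (M : Matrix ((Fin n ⊕ Fin n) ⊕ Fin n) ((Fin n ⊕ Fin n) ⊕ Fin n) ℝ)
    (hM : M = fromBlocks (Aᵀ * P * A - ρ ^ 2 • P) (Aᵀ * P * B)
        (Bᵀ * P * A) (Bᵀ * P * B))
    (N1 N3 : Matrix ((Fin n ⊕ Fin n) ⊕ Fin n) ((Fin n ⊕ Fin n) ⊕ Fin n) ℝ)
    (N2 : ℕ → Matrix ((Fin n ⊕ Fin n) ⊕ Fin n) ((Fin n ⊕ Fin n) ⊕ Fin n) ℝ)
    (hN1 : N1.IsSymm) (hN3 : N3.IsSymm) (hN2 : ∀ k, (N2 k).IsSymm)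
    -- the quadratic bounds and the LMI along trajectories
    (hb1 : ∀ k, f (x (k + 2)) - f xstar ≤ e k ⬝ᵥ N1.mulVec (e k))
    (hb2 : ∀ k, f (x (k + 2)) - f (x (k + 1)) ≤ e k ⬝ᵥ (N2 k).mulVec (e k))
    (hb3 : ∀ k, 0 ≤ e k ⬝ᵥ N3.mulVec (e k))
    (hLMI : ∀ k, e k ⬝ᵥ (M + (1 - ρ ^ 2) • N1 + ρ ^ 2 • N2 k
        + h • N3).mulVec (e k) ≤ 0)
    -- Lyapunov function
    (V : ℕ → ℝ)
    (hV : ∀ k, V k = (ξ k - ξstar) ⬝ᵥ P.mulVec (ξ k - ξstar)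
        + f (x (k + 1)) - f xstar) :
    (∀ k, V (k + 1) ≤ ρ ^ 2 * V k) ∧
    (∀ k, Real.sqrt ((x (k + 1) - xstar) ⬝ᵥ (x (k + 1) - xstar))
        ≤ ρ ^ k * Real.sqrt (2 * V 0 / m)) :=
  afoagd_lyapunov_convergence_general n f g m η α ρ hm hρ hsc xstar hstar x y γ hy hx ξ ξstar hξ
    hξstar u hu e he A hA B hB P hP h hh M hM N1 N3 N2 hb1 hb2 hb3 hLMI V hV
end
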